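/- Let 𝒞 be a small involutive category and V a Hilbert 𝒞-module satisfying the generating property: for any two objects m, n with V_m ≠ 0 and V_n ≠ 0, there exists a morphism c : m ⟶ n with V(c) ≠ 0. Then the following are equivalent: (1) for every object m, V_m is an irreducible 𝒞(m,m)-module (every nonzero vector of V_m generates V_m under the operators V(c), c : m ⟶ m); (2) V is irreducible. -/

import Mathlib

open scoped ComplexInnerProductSpace

/-! Let `ξ ≠ 0` in `V m` and `V n ≠ 0`. The generating property gives `c : m ⟶ n` with
`F c ≠ 0`; as `ξ` is cyclic in `V m`, `F c` cannot vanish on all `F a ξ` (`a : m ⟶ m`), so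
some `F (a ≫ c) ξ` is nonzero. That vector is cyclic in `V n`, and its orbit lies in the span
of the orbit of `ξ`. -/

namespace HilbertModule

variable {R O : Type*} [Semiring R] {Hom : O → O → Type*} {V : O → Type*}
  [∀ m, AddCommMonoid (V m)] [∀ m, Module R (V m)]
  (comp : ∀ {l m n : O}, Hom l m → Hom m n → Hom l n)
  (F : ∀ {m n : O}, Hom m n → (V m →ₗ[R] V n))

def orbitSpan {m : O} (ξ : V m) (n : O) : Submodule R (V n) :=
  Submodule.span R {v | ∃ c : Hom m n, v = F c ξ}

theorem orbitSpan_apply_le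
    (hF_comp : ∀ {l m n : O} (c : Hom l m) (d : Hom m n), F (comp c d) = (F d).comp (F c))
    {m n : O} (c : Hom m n) (ξ : V m) (k : O) :
    orbitSpan @F (F c ξ) k ≤ orbitSpan @F ξ k := by
  refine Submodule.span_le.2 ?_
  rintro _ ⟨d, rfl⟩
  exact Submodule.subset_span ⟨comp c d, by rw [hF_comp]; rfl⟩

theorem exists_comp_apply_ne_zero
    (hF_comp : ∀ {l m n : O} (c : Hom l m) (d : Hom m n), F (comp c d) = (F d).comp (F c))
    {m n : O} {ξ : V m} (hξ : orbitSpan @F ξ m = ⊤) {c : Hom m n} (hc : F c ≠ 0) :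
    ∃ a : Hom m m, F (comp a c) ξ ≠ 0 := by
  by_contra! hkill
  refine hc (LinearMap.ext_on hξ ?_)
  rintro _ ⟨a, rfl⟩
  rw [LinearMap.zero_apply, ← LinearMap.comp_apply, ← hF_comp]
  exact hkill a

end HilbertModule

theorem hilbertModule_allIrreducible_iff_irreducible_general
    {O : Type} (Hom : O → O → Type)
    (comp : ∀ {l m n : O}, Hom l m → Hom m n → Hom l n)
    (V : O → Type)
    [∀ m, NormedAddCommGroup (V m)] [∀ m, InnerProductSpace ℂ (V m)]
    (F : ∀ {m n : O}, Hom m n → (V m →ₗ[ℂ] V n))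
    (hF_comp : ∀ {l m n : O} (c : Hom l m) (d : Hom m n),
      F (comp c d) = (F d).comp (F c))
    (hgen : ∀ m n : O, (∃ ξ : V m, ξ ≠ 0) → (∃ η : V n, η ≠ 0) →
      ∃ c : Hom m n, F c ≠ 0) :
    (∀ (m : O) (ξ : V m), ξ ≠ 0 →
        Submodule.span ℂ {v : V m | ∃ c : Hom m m, v = F c ξ} = ⊤)
      ↔
    (∀ (m : O) (ξ : V m), ξ ≠ 0 → ∀ n : O,
        Submodule.span ℂ {v : V n | ∃ c : Hom m n, v = F c ξ} = ⊤) := by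
  refine ⟨fun hirr m ξ hξ n => ?_, fun hirr m ξ hξ => hirr m ξ hξ m⟩
  by_cases hVn : ∃ η : V n, η ≠ 0
  · obtain ⟨c, hc⟩ := hgen m n ⟨ξ, hξ⟩ hVn
    obtain ⟨a, ha⟩ :=
      HilbertModule.exists_comp_apply_ne_zero @comp @F @hF_comp (hirr m ξ hξ) hc
    exact top_unique <| (hirr n _ ha).ge.trans <|
      HilbertModule.orbitSpan_apply_le @comp @F @hF_comp (comp a c) ξ n
  · push Not at hVn
    exact Submodule.eq_top_iff'.2 fun η => hVn η ▸ Submodule.zero_mem _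

/-- Let `𝒞` be a small involutive category and `V` a Hilbert `𝒞`-module satisfying the
generating property: for any two objects `m`, `n` with `V m ≠ 0` and `V n ≠ 0`, there is
a morphism `c : m ⟶ n` with `F c ≠ 0`.  Then the following are equivalent:
(1) for every object `m`, `V m` is an irreducible `𝒞(m,m)`-module;
(2) `V` is irreducible. -/
theorem hilbertModule_allIrreducible_iff_irreducible
    {O : Type} (Hom : O → O → Type)
    (idm : ∀ m : O, Hom m m)
    (comp : ∀ {l m n : O}, Hom l m → Hom m n → Hom l n)
    (st : ∀ {m n : O}, Hom m n → Hom n m)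
    (hst_st : ∀ {m n : O} (c : Hom m n), st (st c) = c)
    (hst_comp : ∀ {l m n : O} (c : Hom l m) (d : Hom m n),
      st (comp c d) = comp (st d) (st c))
    (hst_id : ∀ m : O, st (idm m) = idm m)
    (V : O → Type)
    [∀ m, NormedAddCommGroup (V m)] [∀ m, InnerProductSpace ℂ (V m)]
    [∀ m, FiniteDimensional ℂ (V m)]
    (F : ∀ {m n : O}, Hom m n → (V m →ₗ[ℂ] V n))
    (hF_id : ∀ m : O, F (idm m) = LinearMap.id)
    (hF_comp : ∀ {l m n : O} (c : Hom l m) (d : Hom m n),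
      F (comp c d) = (F d).comp (F c))
    (hF_adj : ∀ {m n : O} (c : Hom m n) (ξ : V m) (η : V n),
      ⟪F c ξ, η⟫ = ⟪ξ, F (st c) η⟫)
    (hgen : ∀ m n : O, (∃ ξ : V m, ξ ≠ 0) → (∃ η : V n, η ≠ 0) →
      ∃ c : Hom m n, F c ≠ 0) :
    (∀ (m : O) (ξ : V m), ξ ≠ 0 →
        Submodule.span ℂ {v : V m | ∃ c : Hom m m, v = F c ξ} = ⊤)
      ↔
    (∀ (m : O) (ξ : V m), ξ ≠ 0 → ∀ n : O,
        Submodule.span ℂ {v : V n | ∃ c : Hom m n, v = F c ξ} = ⊤) :=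
  hilbertModule_allIrreducible_iff_irreducible_general Hom comp V F hF_comp hgen
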